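/- Let σ(t) = 1/(1+e^{−t}) be the logistic sigmoid, let w ∈ ℝ^{d+1} with coordinates w_0, …, w_d, b ∈ ℝ, f(x) = σ(⟨w,x⟩ + b), y ∈ {0,1}, and l(x) = y·log f(x) + (1−y)·log(1 − f(x)). For λ ∈ [0,1)^d let x_λ := (x_{0,λ}, x_{1,λ}, …, x_{d,λ}) ∈ ℝ^{d+1} be the augmented feature vector. Then for each 1 ≤ j ≤ d, the map t ↦ l(x_{λ[j:=t]}) is differentiable at t = λ_j with derivative (y − f(x_λ)) · Σ_{i=j}^{d} w_i · D_{i,j}, where D_{j,j} = x_{j−1,λ} − x_j and D_{i,j} = (∏_{k=j+1}^{i} λ_k)·(x_{j−1,λ} − x_j) for i > j. -/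

import Mathlib

/-!
The loss is the binary cross-entropy `y log σ(z) + (1 - y) log (1 - σ(z))` of the logit
`z = ⟨w, x_λ⟩ + b`, whose derivative in `z` is `y - σ(z)`. Changing `λ_j` leaves `x_{i,λ}` fixed for
`i < j`, moves `x_{j,λ} = (1 - λ_j) x_j + λ_j x_{j-1,λ}` with slope `x_{j-1,λ} - x_j`, and every later
step of the recursion multiplies that slope by `λ_i`; the chain rule assembles these.
-/

open Finset Real

/-- Recursively interpolated scalars. -/
noncomputable def interp (x : ℕ → ℝ) (lam : ℕ → ℝ) : ℕ → ℝ
  | 0 => x 0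
  | n + 1 => (1 - lam (n + 1)) * x (n + 1) + lam (n + 1) * interp x lam n

lemma hasDerivAt_log_sigmoid (z : ℝ) : HasDerivAt (fun z => log (sigmoid z)) (1 - sigmoid z) z :=
  ((hasDerivAt_sigmoid z).log (sigmoid_pos z).ne').congr_deriv <| by
    field_simp [(sigmoid_pos z).ne']

lemma hasDerivAt_log_one_sub_sigmoid (z : ℝ) :
    HasDerivAt (fun z => log (1 - sigmoid z)) (-sigmoid z) z := by
  simp_rw [← sigmoid_neg]
  exact ((hasDerivAt_log_sigmoid (-z)).comp z (hasDerivAt_neg z)).congr_deriv <| by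
    rw [sigmoid_neg]; ring

lemma hasDerivAt_binaryCrossEntropy (y z : ℝ) :
    HasDerivAt (fun z => y * log (sigmoid z) + (1 - y) * log (1 - sigmoid z)) (y - sigmoid z) z :=
  (((hasDerivAt_log_sigmoid z).const_mul y).add
    ((hasDerivAt_log_one_sub_sigmoid z).const_mul (1 - y))).congr_deriv (by ring)

lemma interp_update_of_lt (x lam : ℕ → ℝ) {j n : ℕ} (t : ℝ) (h : n < j) :
    interp x (Function.update lam j t) n = interp x lam n := by
  induction n with
  | zero => rfl
  | succ n ih => simp only [interp, Function.update_of_ne h.ne, ih (by omega)]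

lemma hasDerivAt_interp_update (x lam : ℕ → ℝ) {j : ℕ} (hj : 1 ≤ j) (n : ℕ) (s : ℝ) :
    HasDerivAt (fun t => interp x (Function.update lam j t) n)
      (if n < j then 0 else (∏ k ∈ Icc (j + 1) n, lam k) * (interp x lam (j - 1) - x j)) s := by
  induction n with
  | zero => rw [if_pos (by omega)]; exact hasDerivAt_const s (x 0)
  | succ n ih =>
    rcases lt_trichotomy (n + 1) j with h | rfl | h
    · simp_rw [if_pos h, interp_update_of_lt x lam _ h]
      exact hasDerivAt_const s _
    · have hn : ∀ t, interp x (Function.update lam (n + 1) t) (n + 1)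
          = (1 - t) * x (n + 1) + t * interp x lam n := fun t => by
        simp only [interp, Function.update_self, interp_update_of_lt x lam t n.lt_succ_self]
      simp_rw [hn, if_neg (lt_irrefl _), Icc_eq_empty_of_lt (Nat.lt_succ_self _), prod_empty,
        one_mul, Nat.add_sub_cancel]
      exact ((((hasDerivAt_id s).const_sub 1).mul_const (x (n + 1))).add
        ((hasDerivAt_id s).mul_const (interp x lam n))).congr_deriv (by ring)
    · simp only [interp, Function.update_of_ne h.ne', if_neg (show ¬ n + 1 < j by omega)]
      rw [if_neg (show ¬ n < j by omega)] at ih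
      refine ((ih.const_mul (lam (n + 1))).const_add ((1 - lam (n + 1)) * x (n + 1))).congr_deriv ?_
      rw [prod_Icc_succ_top (by omega : j + 1 ≤ n + 1)]
      ring

lemma sum_range_ite_lt_eq_sum_Icc {M : Type*} [AddCommMonoid M] (d j : ℕ) (f : ℕ → M) :
    ∑ i ∈ range (d + 1), (if i < j then 0 else f i) = ∑ i ∈ Icc j d, f i := by
  rw [sum_ite, sum_const_zero, zero_add]
  congr 1
  ext i
  simp only [mem_filter, mem_range, mem_Icc, not_lt]
  omega

lemma hasDerivAt_sum_mul_interp_update (d : ℕ) (x lam w : ℕ → ℝ) {j : ℕ} (hj : 1 ≤ j) (s : ℝ) :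
    HasDerivAt (fun t => ∑ i ∈ range (d + 1), w i * interp x (Function.update lam j t) i)
      (∑ i ∈ Icc j d, w i * (if i = j then interp x lam (j - 1) - x j
        else (∏ k ∈ Icc (j + 1) i, lam k) * (interp x lam (j - 1) - x j))) s := by
  refine (HasDerivAt.fun_sum (u := range (d + 1)) fun i _ =>
    (hasDerivAt_interp_update x lam hj i s).const_mul (w i)).congr_deriv ?_
  simp_rw [mul_ite, mul_zero, sum_range_ite_lt_eq_sum_Icc]
  refine sum_congr rfl fun i _ => ?_
  split_ifs with h
  · rw [h, Icc_eq_empty_of_lt j.lt_succ_self, prod_empty, one_mul]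
  · rfl

theorem bce_aug_hasDerivAt_general (d : ℕ) (x : ℕ → ℝ) (lam : ℕ → ℝ)
    (w : ℕ → ℝ) (b : ℝ) (y : ℝ)
    (j : ℕ) (hj1 : 1 ≤ j) :
    HasDerivAt
      (fun t =>
        y * Real.log (1 / (1 + Real.exp
              (-((∑ i ∈ Finset.range (d + 1), w i * interp x (Function.update lam j t) i) + b))))
          + (1 - y) * Real.log (1 - 1 / (1 + Real.exp
              (-((∑ i ∈ Finset.range (d + 1), w i * interp x (Function.update lam j t) i) + b)))))
      ((y - 1 / (1 + Real.exp
          (-((∑ i ∈ Finset.range (d + 1), w i * interp x lam i) + b)))) *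
        ∑ i ∈ Finset.Icc j d, w i *
          (if i = j then interp x lam (j - 1) - x j
           else (∏ k ∈ Finset.Icc (j + 1) i, lam k) * (interp x lam (j - 1) - x j)))
      (lam j) := by
  simp_rw [one_div, ← sigmoid_def]
  have hlogit := (hasDerivAt_sum_mul_interp_update d x lam w hj1 (lam j)).add_const b
  simpa only [Function.update_eq_self, Function.comp_def] using
    (hasDerivAt_binaryCrossEntropy y _).comp (lam j) hlogit

/-- Derivative of the binary cross-entropy loss of the augmented sample with respect
to the `j`-th interpolation coefficient: with `f(v) = σ(⟨w,v⟩ + b)`,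
`l(v) = y·log f(v) + (1−y)·log(1−f(v))`, and `x_λ` the augmented feature vector, the
map `t ↦ l(x_{λ[j:=t]})` is differentiable at `t = λ_j` with derivative
`(y − f(x_λ)) · Σ_{i=j}^{d} w_i · D_{i,j}` where `D_{j,j} = x_{j−1,λ} − x_j` and
`D_{i,j} = (∏_{k=j+1}^{i} λ_k)·(x_{j−1,λ} − x_j)` for `i > j`. -/
theorem bce_aug_hasDerivAt (d : ℕ) (x : ℕ → ℝ) (lam : ℕ → ℝ)
    (hlam : ∀ i, 1 ≤ i → i ≤ d → lam i ∈ Set.Ico (0 : ℝ) 1)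
    (w : ℕ → ℝ) (b : ℝ) (y : ℝ) (hy : y = 0 ∨ y = 1)
    (j : ℕ) (hj1 : 1 ≤ j) (hjd : j ≤ d) :
    HasDerivAt
      (fun t =>
        y * Real.log (1 / (1 + Real.exp
              (-((∑ i ∈ Finset.range (d + 1), w i * interp x (Function.update lam j t) i) + b))))
          + (1 - y) * Real.log (1 - 1 / (1 + Real.exp
              (-((∑ i ∈ Finset.range (d + 1), w i * interp x (Function.update lam j t) i) + b)))))
      ((y - 1 / (1 + Real.exp
          (-((∑ i ∈ Finset.range (d + 1), w i * interp x lam i) + b)))) *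
        ∑ i ∈ Finset.Icc j d, w i *
          (if i = j then interp x lam (j - 1) - x j
           else (∏ k ∈ Finset.Icc (j + 1) i, lam k) * (interp x lam (j - 1) - x j)))
      (lam j) :=
  bce_aug_hasDerivAt_general d x lam w b y j hj1
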